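/- arXiv:math/0703700 — 2 statements merged into one kernel-verified Lean document; each statement's English description precedes it below -/
import Mathlib

section
/- Let ξ(x,y,t) and φ(x,y,t) be smooth functions satisfying the 'Heisenberg Cauchy–Riemann' equations Xξ − Yφ = 0 and Yξ + Xφ = 0, where Xu = u_x + 2y u_t and Yu = u_y − 2x u_t. Then Δ_{H¹}φ = 4 ξ_t and Δ_{H¹}ξ = −4 φ_t, where Δ_{H¹} = X² + Y². -/
noncomputable def px (u : ℝ → ℝ → ℝ → ℝ) (x y t : ℝ) : ℝ := deriv (fun s => u s y t) x
noncomputable def py (u : ℝ → ℝ → ℝ → ℝ) (x y t : ℝ) : ℝ := deriv (fun s => u x s t) y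
noncomputable def pt (u : ℝ → ℝ → ℝ → ℝ) (x y t : ℝ) : ℝ := deriv (fun s => u x y s) t

noncomputable def Xop (u : ℝ → ℝ → ℝ → ℝ) : ℝ → ℝ → ℝ → ℝ :=
  fun x y t => px u x y t + 2 * y * pt u x y t
noncomputable def Yop (u : ℝ → ℝ → ℝ → ℝ) : ℝ → ℝ → ℝ → ℝ :=
  fun x y t => py u x y t - 2 * x * pt u x y t
noncomputable def Tder (u : ℝ → ℝ → ℝ → ℝ) : ℝ → ℝ → ℝ → ℝ :=
  fun x y t => pt u x y t
noncomputable def DeltaH (u : ℝ → ℝ → ℝ → ℝ) : ℝ → ℝ → ℝ → ℝ :=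
  fun x y t => Xop (Xop u) x y t + Yop (Yop u) x y t

def Smooth3 (u : ℝ → ℝ → ℝ → ℝ) : Prop :=
  ContDiff ℝ (⊤ : ℕ∞) (fun p : ℝ × ℝ × ℝ => u p.1 p.2.1 p.2.2)

/-! Auxiliary machinery -/

noncomputable def Fv (U : ℝ × ℝ × ℝ → ℝ) (v : ℝ × ℝ × ℝ) : ℝ × ℝ × ℝ → ℝ :=
  fun q => fderiv ℝ U q v

lemma Fv_contDiff {U : ℝ × ℝ × ℝ → ℝ} (hU : ContDiff ℝ (⊤ : ℕ∞) U) (v : ℝ × ℝ × ℝ) :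
    ContDiff ℝ (⊤ : ℕ∞) (Fv U v) :=
  (hU.fderiv_right (by simp)).clm_apply contDiff_const

lemma line1 {G : ℝ × ℝ × ℝ → ℝ} (hG : ContDiff ℝ (⊤ : ℕ∞) G) (x y t : ℝ) :
    HasDerivAt (fun s => G (s, y, t)) (fderiv ℝ G (x, y, t) (1, 0, 0)) x := by
  have h := ((hG.differentiable (by simp)) (x, y, t)).hasFDerivAt.comp_hasDerivAt x
    ((hasDerivAt_id x).prodMk (hasDerivAt_const x (y, t)))
  exact h

lemma line2 {G : ℝ × ℝ × ℝ → ℝ} (hG : ContDiff ℝ (⊤ : ℕ∞) G) (x y t : ℝ) :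
    HasDerivAt (fun s => G (x, s, t)) (fderiv ℝ G (x, y, t) (0, 1, 0)) y := by
  have h := ((hG.differentiable (by simp)) (x, y, t)).hasFDerivAt.comp_hasDerivAt y
    ((hasDerivAt_const y x).prodMk ((hasDerivAt_id y).prodMk (hasDerivAt_const y t)))
  exact h

lemma line3 {G : ℝ × ℝ × ℝ → ℝ} (hG : ContDiff ℝ (⊤ : ℕ∞) G) (x y t : ℝ) :
    HasDerivAt (fun s => G (x, y, s)) (fderiv ℝ G (x, y, t) (0, 0, 1)) t := by
  have h := ((hG.differentiable (by simp)) (x, y, t)).hasFDerivAt.comp_hasDerivAt t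
    ((hasDerivAt_const t x).prodMk ((hasDerivAt_const t y).prodMk (hasDerivAt_id t)))
  exact h

lemma fderiv_Fv {U : ℝ × ℝ × ℝ → ℝ} (hU : ContDiff ℝ (⊤ : ℕ∞) U) (p v w : ℝ × ℝ × ℝ) :
    fderiv ℝ (Fv U v) p w = fderiv ℝ (fderiv ℝ U) p w v := by
  have hD : HasFDerivAt (fderiv ℝ U) (fderiv ℝ (fderiv ℝ U) p) p :=
    (((hU.fderiv_right (m := (⊤ : ℕ∞)) (by simp)).differentiable (by simp)) p).hasFDerivAt
  have h := (ContinuousLinearMap.apply ℝ ℝ v).hasFDerivAt.comp p hD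
  have h2 : fderiv ℝ (Fv U v) p
      = (ContinuousLinearMap.apply ℝ ℝ v).comp (fderiv ℝ (fderiv ℝ U) p) :=
    HasFDerivAt.fderiv h
  rw [h2]; rfl

lemma symm_second {U : ℝ × ℝ × ℝ → ℝ} (hU : ContDiff ℝ (⊤ : ℕ∞) U) (p v w : ℝ × ℝ × ℝ) :
    fderiv ℝ (fderiv ℝ U) p v w = fderiv ℝ (fderiv ℝ U) p w v :=
  second_derivative_symmetric (fun q => ((hU.differentiable (by simp)) q).hasFDerivAt)
    ((((hU.fderiv_right (m := (⊤ : ℕ∞)) (by simp)).differentiable (by simp)) p).hasFDerivAt) v w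

lemma comm_lemma (u : ℝ → ℝ → ℝ → ℝ) (hu : Smooth3 u) (x y t : ℝ) :
    Xop (Yop u) x y t - Yop (Xop u) x y t = -4 * pt u x y t := by
  have hU : ContDiff ℝ (⊤ : ℕ∞) (fun p : ℝ × ℝ × ℝ => u p.1 p.2.1 p.2.2) := hu
  set U : ℝ × ℝ × ℝ → ℝ := fun p => u p.1 p.2.1 p.2.2 with hUdef
  have hF1 := Fv_contDiff hU (1, 0, 0)
  have hF2 := Fv_contDiff hU (0, 1, 0)
  have hF3 := Fv_contDiff hU (0, 0, 1)
  have hpx : ∀ a b c : ℝ, px u a b c = Fv U (1, 0, 0) (a, b, c) :=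
    fun a b c => (line1 hU a b c).deriv
  have hpy : ∀ a b c : ℝ, py u a b c = Fv U (0, 1, 0) (a, b, c) :=
    fun a b c => (line2 hU a b c).deriv
  have hpt : ∀ a b c : ℝ, pt u a b c = Fv U (0, 0, 1) (a, b, c) :=
    fun a b c => (line3 hU a b c).deriv
  have hYu : (fun s => Yop u s y t) =
      (fun s => Fv U (0,1,0) (s, y, t) - 2 * s * Fv U (0,0,1) (s, y, t)) := by
    funext s; simp only [Yop, hpy, hpt]
  have hYu' : (fun s => Yop u x y s) =
      (fun s => Fv U (0,1,0) (x, y, s) - 2 * x * Fv U (0,0,1) (x, y, s)) := by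
    funext s; simp only [Yop, hpy, hpt]
  have hXu : (fun s => Xop u x s t) =
      (fun s => Fv U (1,0,0) (x, s, t) + 2 * s * Fv U (0,0,1) (x, s, t)) := by
    funext s; simp only [Xop, hpx, hpt]
  have hXu' : (fun s => Xop u x y s) =
      (fun s => Fv U (1,0,0) (x, y, s) + 2 * y * Fv U (0,0,1) (x, y, s)) := by
    funext s; simp only [Xop, hpx, hpt]
  have h1 : px (Yop u) x y t =
      fderiv ℝ (Fv U (0,1,0)) (x,y,t) (1,0,0)
        - (2 * 1 * Fv U (0,0,1) (x,y,t) + 2 * x * fderiv ℝ (Fv U (0,0,1)) (x,y,t) (1,0,0)) := by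
    have H := (line1 hF2 x y t).sub
      (((hasDerivAt_id x).const_mul 2).mul (line1 hF3 x y t))
    simp only [id_eq, Pi.sub_def, Pi.mul_def] at H
    rw [← hYu] at H
    exact H.deriv
  have h2 : pt (Yop u) x y t =
      fderiv ℝ (Fv U (0,1,0)) (x,y,t) (0,0,1)
        - 2 * x * fderiv ℝ (Fv U (0,0,1)) (x,y,t) (0,0,1) := by
    have H := (line3 hF2 x y t).sub ((line3 hF3 x y t).const_mul (2 * x))
    simp only [Pi.sub_def] at H
    rw [← hYu'] at H
    exact H.deriv
  have h3 : py (Xop u) x y t =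
      fderiv ℝ (Fv U (1,0,0)) (x,y,t) (0,1,0)
        + (2 * 1 * Fv U (0,0,1) (x,y,t) + 2 * y * fderiv ℝ (Fv U (0,0,1)) (x,y,t) (0,1,0)) := by
    have H := (line2 hF1 x y t).add
      (((hasDerivAt_id y).const_mul 2).mul (line2 hF3 x y t))
    simp only [id_eq, Pi.add_def, Pi.mul_def] at H
    rw [← hXu] at H
    exact H.deriv
  have h4 : pt (Xop u) x y t =
      fderiv ℝ (Fv U (1,0,0)) (x,y,t) (0,0,1)
        + 2 * y * fderiv ℝ (Fv U (0,0,1)) (x,y,t) (0,0,1) := by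
    have H := (line3 hF1 x y t).add ((line3 hF3 x y t).const_mul (2 * y))
    simp only [Pi.add_def] at H
    rw [← hXu'] at H
    exact H.deriv
  show px (Yop u) x y t + 2 * y * pt (Yop u) x y t
      - (py (Xop u) x y t - 2 * x * pt (Xop u) x y t) = -4 * pt u x y t
  rw [h1, h2, h3, h4, hpt x y t,
    fderiv_Fv hU (x,y,t) (0,1,0) (1,0,0), fderiv_Fv hU (x,y,t) (0,0,1) (1,0,0),
    fderiv_Fv hU (x,y,t) (0,1,0) (0,0,1), fderiv_Fv hU (x,y,t) (0,0,1) (0,0,1),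
    fderiv_Fv hU (x,y,t) (1,0,0) (0,1,0), fderiv_Fv hU (x,y,t) (0,0,1) (0,1,0),
    fderiv_Fv hU (x,y,t) (1,0,0) (0,0,1),
    symm_second hU (x,y,t) (1,0,0) (0,1,0),
    symm_second hU (x,y,t) (1,0,0) (0,0,1),
    symm_second hU (x,y,t) (0,1,0) (0,0,1)]
  ring

lemma Xop_neg (v : ℝ → ℝ → ℝ → ℝ) (x y t : ℝ) :
    Xop (fun a b c => -(v a b c)) x y t = -(Xop v x y t) := by
  simp only [Xop, px, pt, deriv.fun_neg]
  ring

lemma Yop_neg (v : ℝ → ℝ → ℝ → ℝ) (x y t : ℝ) :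
    Yop (fun a b c => -(v a b c)) x y t = -(Yop v x y t) := by
  simp only [Yop, py, pt, deriv.fun_neg]
  ring

theorem stmt7 (ξ φ : ℝ → ℝ → ℝ → ℝ) (hξ : Smooth3 ξ) (hφ : Smooth3 φ)
    (hCR1 : ∀ x y t : ℝ, Xop ξ x y t - Yop φ x y t = 0)
    (hCR2 : ∀ x y t : ℝ, Yop ξ x y t + Xop φ x y t = 0) :
    (∀ x y t : ℝ, DeltaH φ x y t = 4 * pt ξ x y t) ∧
    (∀ x y t : ℝ, DeltaH ξ x y t = -4 * pt φ x y t) := by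
  have hXφ : Xop φ = fun a b c => -(Yop ξ a b c) := by
    funext a b c; have := hCR2 a b c; linarith
  have hYφ : Yop φ = Xop ξ := by
    funext a b c; have := hCR1 a b c; linarith
  constructor
  · intro x y t
    have hc := comm_lemma ξ hξ x y t
    show Xop (Xop φ) x y t + Yop (Yop φ) x y t = 4 * pt ξ x y t
    rw [hXφ, hYφ, Xop_neg]
    linarith
  · intro x y t
    have hc := comm_lemma φ hφ x y t
    have hXξ : Xop ξ = Yop φ := by
      funext a b c; have := hCR1 a b c; linarith
    have hYξ : Yop ξ = fun a b c => -(Xop φ a b c) := by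
      funext a b c; have := hCR2 a b c; linarith
    show Xop (Xop ξ) x y t + Yop (Yop ξ) x y t = -4 * pt φ x y t
    rw [hXξ, hYξ, Yop_neg]
    linarith
end

section
/- Let ξ, φ, τ be smooth functions of (x,y,t) satisfying Xξ − Yφ = 0, Yξ + Xφ = 0, Xτ = 2yXξ + 2xYξ + 2φ, and Yτ = −2xXξ + 2yYξ − 2ξ, where Xu = u_x + 2y u_t and Yu = u_y − 2x u_t. Then τ_t = 2y ξ_t − 2x φ_t + 2 Xξ. -/
section Helpers

variable {E : Type*} [NormedAddCommGroup E] [NormedSpace ℝ E]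

lemma sliceD1' {f : ℝ × ℝ × ℝ → E} {x y t : ℝ} (hf : DifferentiableAt ℝ f (x, y, t)) :
    HasDerivAt (fun s => f (s, y, t)) (fderiv ℝ f (x, y, t) (1, 0, 0)) x := by
  simpa [Function.comp_def, Prod.mk_zero_zero] using hf.hasFDerivAt.comp_hasDerivAt x (HasDerivAt.prodMk (hasDerivAt_id x) (hasDerivAt_const x (y, t)))

lemma sliceD2' {f : ℝ × ℝ × ℝ → E} {x y t : ℝ} (hf : DifferentiableAt ℝ f (x, y, t)) :
    HasDerivAt (fun s => f (x, s, t)) (fderiv ℝ f (x, y, t) (0, 1, 0)) y := by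
  simpa [Function.comp_def] using hf.hasFDerivAt.comp_hasDerivAt y
    (HasDerivAt.prodMk (hasDerivAt_const y x) (HasDerivAt.prodMk (hasDerivAt_id y) (hasDerivAt_const y t)))

lemma sliceD3' {f : ℝ × ℝ × ℝ → E} {x y t : ℝ} (hf : DifferentiableAt ℝ f (x, y, t)) :
    HasDerivAt (fun s => f (x, y, s)) (fderiv ℝ f (x, y, t) (0, 0, 1)) t := by
  simpa [Function.comp_def] using hf.hasFDerivAt.comp_hasDerivAt t
    (HasDerivAt.prodMk (hasDerivAt_const t x) (HasDerivAt.prodMk (hasDerivAt_const t y) (hasDerivAt_id t)))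

noncomputable def d1 (u : ℝ → ℝ → ℝ → ℝ) (x y t : ℝ) (v : ℝ × ℝ × ℝ) : ℝ :=
  fderiv ℝ (fun p : ℝ × ℝ × ℝ => u p.1 p.2.1 p.2.2) (x, y, t) v

noncomputable def d2 (u : ℝ → ℝ → ℝ → ℝ) (x y t : ℝ) (v w : ℝ × ℝ × ℝ) : ℝ :=
  fderiv ℝ (fderiv ℝ (fun p : ℝ × ℝ × ℝ => u p.1 p.2.1 p.2.2)) (x, y, t) v w

variable {u : ℝ → ℝ → ℝ → ℝ} {x y t : ℝ}

lemma Smooth3.diff (hu : Smooth3 u) :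
    Differentiable ℝ (fun p : ℝ × ℝ × ℝ => u p.1 p.2.1 p.2.2) :=
  hu.differentiable (by simp)

lemma Smooth3.diff' (hu : Smooth3 u) :
    Differentiable ℝ (fderiv ℝ (fun p : ℝ × ℝ × ℝ => u p.1 p.2.1 p.2.2)) :=
  (ContDiff.fderiv_right (m := 1) hu (WithTop.coe_le_coe.mpr le_top)).differentiable one_ne_zero

lemma d2symm (hu : Smooth3 u) (v w : ℝ × ℝ × ℝ) : d2 u x y t v w = d2 u x y t w v :=
  second_derivative_symmetric (fun p => (hu.diff p).hasFDerivAt)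
    (hu.diff' (x, y, t)).hasFDerivAt v w

lemma uD1 (hu : Smooth3 u) : HasDerivAt (fun s => u s y t) (d1 u x y t (1, 0, 0)) x :=
  sliceD1' (hu.diff (x, y, t))

lemma uD2 (hu : Smooth3 u) : HasDerivAt (fun s => u x s t) (d1 u x y t (0, 1, 0)) y :=
  sliceD2' (hu.diff (x, y, t))

lemma uD3 (hu : Smooth3 u) : HasDerivAt (fun s => u x y s) (d1 u x y t (0, 0, 1)) t :=
  sliceD3' (hu.diff (x, y, t))

lemma dD1 (hu : Smooth3 u) (v : ℝ × ℝ × ℝ) :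
    HasDerivAt (fun s => d1 u s y t v) (d2 u x y t (1, 0, 0) v) x := by
  have h := (sliceD1' (hu.diff' (x, y, t))).clm_apply (hasDerivAt_const x v)
  simpa [d1, d2] using h

lemma dD2 (hu : Smooth3 u) (v : ℝ × ℝ × ℝ) :
    HasDerivAt (fun s => d1 u x s t v) (d2 u x y t (0, 1, 0) v) y := by
  have h := (sliceD2' (hu.diff' (x, y, t))).clm_apply (hasDerivAt_const y v)
  simpa [d1, d2] using h

lemma dD3 (hu : Smooth3 u) (v : ℝ × ℝ × ℝ) :
    HasDerivAt (fun s => d1 u x y s v) (d2 u x y t (0, 0, 1) v) t := by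
  have h := (sliceD3' (hu.diff' (x, y, t))).clm_apply (hasDerivAt_const t v)
  simpa [d1, d2] using h

lemma px_eq (hu : Smooth3 u) : px u x y t = d1 u x y t (1, 0, 0) := (uD1 hu).deriv
lemma py_eq (hu : Smooth3 u) : py u x y t = d1 u x y t (0, 1, 0) := (uD2 hu).deriv
lemma pt_eq (hu : Smooth3 u) : pt u x y t = d1 u x y t (0, 0, 1) := (uD3 hu).deriv

lemma Xfun (hu : Smooth3 u) (y t : ℝ) :
    (fun s => Xop u s y t) = fun s => d1 u s y t (1, 0, 0) + 2 * y * d1 u s y t (0, 0, 1) :=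
  funext fun s => by simp [Xop, px_eq hu, pt_eq hu]

lemma Xfun2 (hu : Smooth3 u) (x t : ℝ) :
    (fun s => Xop u x s t) = fun s => d1 u x s t (1, 0, 0) + 2 * s * d1 u x s t (0, 0, 1) :=
  funext fun s => by simp [Xop, px_eq hu, pt_eq hu]

lemma Xfun3 (hu : Smooth3 u) (x y : ℝ) :
    (fun s => Xop u x y s) = fun s => d1 u x y s (1, 0, 0) + 2 * y * d1 u x y s (0, 0, 1) :=
  funext fun s => by simp [Xop, px_eq hu, pt_eq hu]

lemma Yfun (hu : Smooth3 u) (y t : ℝ) :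
    (fun s => Yop u s y t) = fun s => d1 u s y t (0, 1, 0) - 2 * s * d1 u s y t (0, 0, 1) :=
  funext fun s => by simp [Yop, py_eq hu, pt_eq hu]

lemma Yfun2 (hu : Smooth3 u) (x t : ℝ) :
    (fun s => Yop u x s t) = fun s => d1 u x s t (0, 1, 0) - 2 * x * d1 u x s t (0, 0, 1) :=
  funext fun s => by simp [Yop, py_eq hu, pt_eq hu]

lemma Yfun3 (hu : Smooth3 u) (x y : ℝ) :
    (fun s => Yop u x y s) = fun s => d1 u x y s (0, 1, 0) - 2 * x * d1 u x y s (0, 0, 1) :=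
  funext fun s => by simp [Yop, py_eq hu, pt_eq hu]

lemma XD1 (hu : Smooth3 u) :
    HasDerivAt (fun s => Xop u s y t)
      (d2 u x y t (1, 0, 0) (1, 0, 0) + 2 * y * d2 u x y t (1, 0, 0) (0, 0, 1)) x := by
  rw [Xfun hu]
  exact (dD1 hu (1, 0, 0)).add ((dD1 hu (0, 0, 1)).const_mul (2 * y))

lemma XD2 (hu : Smooth3 u) :
    HasDerivAt (fun s => Xop u x s t)
      (d2 u x y t (0, 1, 0) (1, 0, 0) +
        (2 * 1 * d1 u x y t (0, 0, 1) + 2 * y * d2 u x y t (0, 1, 0) (0, 0, 1))) y := by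
  rw [Xfun2 hu]
  exact (dD2 hu (1, 0, 0)).add (((hasDerivAt_id y).const_mul 2).mul (dD2 hu (0, 0, 1)))

lemma XD3 (hu : Smooth3 u) :
    HasDerivAt (fun s => Xop u x y s)
      (d2 u x y t (0, 0, 1) (1, 0, 0) + 2 * y * d2 u x y t (0, 0, 1) (0, 0, 1)) t := by
  rw [Xfun3 hu]
  exact (dD3 hu (1, 0, 0)).add ((dD3 hu (0, 0, 1)).const_mul (2 * y))

lemma YD1 (hu : Smooth3 u) :
    HasDerivAt (fun s => Yop u s y t)
      (d2 u x y t (1, 0, 0) (0, 1, 0) -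
        (2 * 1 * d1 u x y t (0, 0, 1) + 2 * x * d2 u x y t (1, 0, 0) (0, 0, 1))) x := by
  rw [Yfun hu]
  exact (dD1 hu (0, 1, 0)).sub (((hasDerivAt_id x).const_mul 2).mul (dD1 hu (0, 0, 1)))

lemma YD2 (hu : Smooth3 u) :
    HasDerivAt (fun s => Yop u x s t)
      (d2 u x y t (0, 1, 0) (0, 1, 0) - 2 * x * d2 u x y t (0, 1, 0) (0, 0, 1)) y := by
  rw [Yfun2 hu]
  exact (dD2 hu (0, 1, 0)).sub ((dD2 hu (0, 0, 1)).const_mul (2 * x))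

lemma YD3 (hu : Smooth3 u) :
    HasDerivAt (fun s => Yop u x y s)
      (d2 u x y t (0, 0, 1) (0, 1, 0) - 2 * x * d2 u x y t (0, 0, 1) (0, 0, 1)) t := by
  rw [Yfun3 hu]
  exact (dD3 hu (0, 1, 0)).sub ((dD3 hu (0, 0, 1)).const_mul (2 * x))

end Helpers

theorem stmt9 (ξ φ τ : ℝ → ℝ → ℝ → ℝ)
    (hξ : Smooth3 ξ) (hφ : Smooth3 φ) (hτ : Smooth3 τ)
    (hCR1 : ∀ x y t : ℝ, Xop ξ x y t - Yop φ x y t = 0)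
    (hCR2 : ∀ x y t : ℝ, Yop ξ x y t + Xop φ x y t = 0)
    (h32 : ∀ x y t : ℝ, Xop τ x y t = 2 * y * Xop ξ x y t + 2 * x * Yop ξ x y t + 2 * φ x y t)
    (h33 : ∀ x y t : ℝ, Yop τ x y t = -2 * x * Xop ξ x y t + 2 * y * Yop ξ x y t - 2 * ξ x y t) :
    ∀ x y t : ℝ, pt τ x y t = 2 * y * pt ξ x y t - 2 * x * pt φ x y t + 2 * Xop ξ x y t := by
  intro x y t
  -- derivative equations from h33, directions 1 and 3
  have hfa : (fun s => Yop τ s y t)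
      = fun s => -2 * s * Xop ξ s y t + 2 * y * Yop ξ s y t - 2 * ξ s y t :=
    funext fun s => h33 s y t
  have Ea := (hfa ▸ YD1 hτ).unique
    (((((hasDerivAt_id x).const_mul (-2)).mul (XD1 hξ)).add
      ((YD1 hξ).const_mul (2 * y))).sub ((uD1 hξ).const_mul 2))
  have hfb : (fun s => Yop τ x y s)
      = fun s => -2 * x * Xop ξ x y s + 2 * y * Yop ξ x y s - 2 * ξ x y s :=
    funext fun s => h33 x y s
  have Eb := (hfb ▸ YD3 (x := x) (y := y) (t := t) hτ).unique
    ((((XD3 (x := x) (y := y) (t := t) hξ).const_mul (-2 * x)).add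
      ((YD3 (x := x) (y := y) (t := t) hξ).const_mul (2 * y))).sub
      ((uD3 (x := x) (y := y) (t := t) hξ).const_mul 2))
  -- derivative equations from h32, directions 2 and 3
  have hfc : (fun s => Xop τ x s t)
      = fun s => 2 * s * Xop ξ x s t + 2 * x * Yop ξ x s t + 2 * φ x s t :=
    funext fun s => h32 x s t
  have Ec := (hfc ▸ XD2 (x := x) (y := y) (t := t) hτ).unique
    (((((hasDerivAt_id y).const_mul 2).mul (XD2 (x := x) (y := y) (t := t) hξ)).add
      ((YD2 (x := x) (y := y) (t := t) hξ).const_mul (2 * x))).add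
      ((uD2 (x := x) (y := y) (t := t) hφ).const_mul 2))
  have hfd : (fun s => Xop τ x y s)
      = fun s => 2 * y * Xop ξ x y s + 2 * x * Yop ξ x y s + 2 * φ x y s :=
    funext fun s => h32 x y s
  have Ed := (hfd ▸ XD3 (x := x) (y := y) (t := t) hτ).unique
    ((((XD3 (x := x) (y := y) (t := t) hξ).const_mul (2 * y)).add
      ((YD3 (x := x) (y := y) (t := t) hξ).const_mul (2 * x))).add
      ((uD3 (x := x) (y := y) (t := t) hφ).const_mul 2))
  -- derivative equations from hCR1, directions 1 and 3
  have hf1 : (fun s => Xop ξ s y t) = fun s => Yop φ s y t :=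
    funext fun s => sub_eq_zero.mp (hCR1 s y t)
  have q1 := (hf1 ▸ XD1 (x := x) (y := y) (t := t) hξ).unique (YD1 (x := x) (y := y) (t := t) hφ)
  have hf3 : (fun s => Xop ξ x y s) = fun s => Yop φ x y s :=
    funext fun s => sub_eq_zero.mp (hCR1 x y s)
  have q3 := (hf3 ▸ XD3 (x := x) (y := y) (t := t) hξ).unique (YD3 (x := x) (y := y) (t := t) hφ)
  -- derivative equations from hCR2, directions 2 and 3
  have hg2 : (fun s => Yop ξ x s t) = fun s => -Xop φ x s t :=
    funext fun s => eq_neg_of_add_eq_zero_left (hCR2 x s t)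
  have r2 := (hg2 ▸ YD2 (x := x) (y := y) (t := t) hξ).unique (XD2 (x := x) (y := y) (t := t) hφ).neg
  have hg3 : (fun s => Yop ξ x y s) = fun s => -Xop φ x y s :=
    funext fun s => eq_neg_of_add_eq_zero_left (hCR2 x y s)
  have r3 := (hg3 ▸ YD3 (x := x) (y := y) (t := t) hξ).unique (XD3 (x := x) (y := y) (t := t) hφ).neg
  -- pointwise CR1
  have CR1p := sub_eq_zero.mp (hCR1 x y t)
  -- symmetry facts
  have syms12 := d2symm (x := x) (y := y) (t := t) hξ (1, 0, 0) (0, 1, 0)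
  have syms13 := d2symm (x := x) (y := y) (t := t) hξ (1, 0, 0) (0, 0, 1)
  have syms32 := d2symm (x := x) (y := y) (t := t) hξ (0, 0, 1) (0, 1, 0)
  have symt12 := d2symm (x := x) (y := y) (t := t) hφ (1, 0, 0) (0, 1, 0)
  have symt13 := d2symm (x := x) (y := y) (t := t) hφ (1, 0, 0) (0, 0, 1)
  have symt32 := d2symm (x := x) (y := y) (t := t) hφ (0, 0, 1) (0, 1, 0)
  have symu12 := d2symm (x := x) (y := y) (t := t) hτ (1, 0, 0) (0, 1, 0)
  have symu13 := d2symm (x := x) (y := y) (t := t) hτ (1, 0, 0) (0, 0, 1)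
  have symu32 := d2symm (x := x) (y := y) (t := t) hτ (0, 0, 1) (0, 1, 0)
  -- normalize all Xop/Yop values to d1 atoms
  simp only [Xop, Yop, px_eq hξ, py_eq hξ, pt_eq hξ, px_eq hφ, py_eq hφ, pt_eq hφ,
    px_eq hτ, py_eq hτ, pt_eq hτ, id_eq] at Ea Eb Ec Ed CR1p ⊢
  linear_combination (-(1:ℝ)/4) * Ea + (-y/2) * Eb + ((1:ℝ)/4) * Ec + (-x/2) * Ed
    + ((1:ℝ)/4) * symu12 + (-x/2) * symu13 + (y/2) * symu32
    + (-(1:ℝ)/2) * CR1p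
    + (x/2) * q1 + (x*y) * q3 + (x/2) * r2 + (-x^2) * r3
    + (x/2) * symt12 + (-x^2) * symt13 + (x*y) * symt32
    + (-y/2) * syms12 + (x*y) * syms13 + (-y^2) * syms32
end
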